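/- arXiv:2306.15920 — 3 statements merged into one kernel-verified Lean document; each statement's English description precedes it below -/
import Mathlib

section
/- Run Round-Robin (Mechanism 1) on the truthful profile (v_1, …, v_n) of normalized, monotone valuations, renumbering the goods so that g_k is the good allocated at stage k; for i ∈ {0, …, m}, let G_i = {g_{i+1}, …, g_m} be the remaining goods at the end of stage i and B_i the set of goods agent 1 has received by the end of stage i. Run Mechanism 1 again on the profile where agent 1 misreports an arbitrary normalized monotone valuation v_1' (the others unchanged); let g_k' be the good allocated at stage k of this run, and define G_i' = {g_{i+1}', …, g_m'} and B_i' analogously. Let X_i = B_i' ∪ (G_i' \ G_i). Then for every i ∈ {0, …, m} there exists a mapping M_i : X_i → B_i such that (1) v_1({g}) ≤ v_1({M_i(g)}) for every g ∈ X_i, and (2) |M_i^{-1}(b)| ≤ 2 for every b ∈ B_i. -/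
/-- A valuation: normalized and monotone set function on goods. -/
def IsValuation {m : ℕ} (v : Finset (Fin m) → ℝ) : Prop :=
  v ∅ = 0 ∧ ∀ S T : Finset (Fin m), S ⊆ T → v S ≤ v T

def AdditiveVal {m : ℕ} (v : Finset (Fin m) → ℝ) : Prop :=
  ∀ S T : Finset (Fin m), Disjoint S T → v (S ∪ T) = v S + v T

def SubadditiveVal {m : ℕ} (v : Finset (Fin m) → ℝ) : Prop :=
  ∀ S T : Finset (Fin m), v (S ∪ T) ≤ v S + v T

def CancelableVal {m : ℕ} (v : Finset (Fin m) → ℝ) : Prop :=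
  ∀ S T : Finset (Fin m), ∀ g : Fin m, g ∉ S ∪ T → v (insert g S) > v (insert g T) → v S > v T

def SubmodularVal {m : ℕ} (v : Finset (Fin m) → ℝ) : Prop :=
  ∀ S T : Finset (Fin m), S ⊆ T → ∀ g : Fin m, g ∉ T →
    v (insert g T) - v T ≤ v (insert g S) - v S

def MultiplicativeVal {m : ℕ} (v : Finset (Fin m) → ℝ) : Prop :=
  (∀ g : Fin m, 1 ≤ v {g}) ∧ ∀ S : Finset (Fin m), S.Nonempty → v S = ∏ g ∈ S, v {g}

def XOSVal {m : ℕ} (v : Finset (Fin m) → ℝ) : Prop :=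
  ∃ (k : ℕ) (f : Fin (k + 1) → Finset (Fin m) → ℝ),
    (∀ j, AdditiveVal (f j)) ∧
    ∀ S : Finset (Fin m), (∃ j, v S = f j S) ∧ ∀ j, f j S ≤ v S

def IsAllocation {n m : ℕ} (A : Fin n → Finset (Fin m)) : Prop :=
  (∀ i j : Fin n, i ≠ j → Disjoint (A i) (A j)) ∧ ∀ g : Fin m, ∃ i, g ∈ A i

/-- `α`-EF1. -/
def EF1 {n m : ℕ} (α : ℝ) (v : Fin n → Finset (Fin m) → ℝ) (A : Fin n → Finset (Fin m)) : Prop :=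
  ∀ i j : Fin n, A j = ∅ ∨ ∃ g ∈ A j, α * v i (A j \ {g}) ≤ v i (A i)

/-- The remaining good maximizing `f`, ties broken in favor of the smallest index. -/
noncomputable def chooseFavorite {m : ℕ} (f : Fin m → ℝ) (S : Finset (Fin m))
    (h : S.Nonempty) : Fin m :=
  (S.filter fun g => ∀ h' ∈ S, f h' ≤ f g).min' (by
    obtain ⟨b, hb, hmax⟩ := S.exists_max_image f h
    exact ⟨b, Finset.mem_filter.mpr ⟨hb, hmax⟩⟩)

/-- The state (bundles, remaining goods) of round-robin after `k` stages, where at stage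
`k+1` the agent `k % n` picks a remaining good maximizing `score i (current bundle of i)`,
ties broken towards the smallest index. -/
noncomputable def rrState {n m : ℕ} (score : Fin n → Finset (Fin m) → Fin m → ℝ) :
    ℕ → (Fin n → Finset (Fin m)) × Finset (Fin m)
  | 0 => (fun _ => (∅ : Finset (Fin m)), Finset.univ)
  | k + 1 =>
      let st := rrState score k
      if hn : 0 < n then
        if h : st.2.Nonempty then
          let i : Fin n := ⟨k % n, Nat.mod_lt k hn⟩
          let g := chooseFavorite (score i (st.1 i)) st.2 h
          (Function.update st.1 i (insert g (st.1 i)), st.2.erase g)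
        else st
      else st

/-- Mechanism 1: Round-Robin where each agent picks a remaining good of largest value. -/
noncomputable def roundRobin1 {n m : ℕ} (v : Fin n → Finset (Fin m) → ℝ) :
    Fin n → Finset (Fin m) :=
  (rrState (fun i _ g => v i {g}) m).1

/-- Mechanism 2: Round-Robin where each agent picks a remaining good of largest
marginal value with respect to his current bundle. -/
noncomputable def roundRobin2 {n m : ℕ} (v : Fin n → Finset (Fin m) → ℝ) :
    Fin n → Finset (Fin m) :=
  (rrState (fun i A g => v i (insert g A) - v i A) m).1

noncomputable def expTransform {m : ℕ} (δ : ℝ) (v : Finset (Fin m) → ℝ) :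
    Finset (Fin m) → ℝ :=
  fun S => if S = ∅ then 0 else Real.exp (δ * v S)

def addVal {m : ℕ} (w : Fin m → ℝ) : Finset (Fin m) → ℝ := fun S => ∑ g ∈ S, w g

def Envies {n m : ℕ} (v : Fin n → Finset (Fin m) → ℝ) (A : Fin n → Finset (Fin m))
    (i j : Fin n) : Prop :=
  v i (A i) < v i (A j)

def Unenvied {n m : ℕ} (v : Fin n → Finset (Fin m) → ℝ) (A : Fin n → Finset (Fin m))
    (j : Fin n) : Prop :=
  ∀ i : Fin n, ¬ Envies v A i j

def EnvyCycleStep {n m : ℕ} (v : Fin n → Finset (Fin m) → ℝ)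
    (A A' : Fin n → Finset (Fin m)) : Prop :=
  ∃ σ : Equiv.Perm (Fin n), σ.IsCycle ∧ (∀ i, σ i ≠ i → Envies v A i (σ i)) ∧
    ∀ i, A' i = A (σ i)

def HasEnvyCycle {n m : ℕ} (v : Fin n → Finset (Fin m) → ℝ)
    (A : Fin n → Finset (Fin m)) : Prop :=
  ∃ σ : Equiv.Perm (Fin n), σ.IsCycle ∧ ∀ i, σ i ≠ i → Envies v A i (σ i)

def Eliminated {n m : ℕ} (v : Fin n → Finset (Fin m) → ℝ)
    (A B : Fin n → Finset (Fin m)) : Prop :=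
  Relation.ReflTransGen (EnvyCycleStep v) A B ∧ ¬ HasEnvyCycle v B

inductive EGP {n m : ℕ} (v : Fin n → Finset (Fin m) → ℝ) :
    ℕ → (Fin n → Finset (Fin m)) → Prop
  | init : EGP v 0 (fun _ => ∅)
  | step {k : ℕ} (hk : k < m) {A C : Fin n → Finset (Fin m)} (j : Fin n) :
      EGP v k A → Unenvied v A j → (∀ j' : Fin n, Unenvied v A j' → j ≤ j') →
      Eliminated v (Function.update A j (insert ⟨k, hk⟩ (A j))) C →
      EGP v (k + 1) C

inductive EGP2 {n m : ℕ} (v : Fin n → Finset (Fin m) → ℝ) :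
    ℕ → (Fin n → Finset (Fin m)) → Finset (Fin m) → Prop
  | init : EGP2 v 0 (fun _ => ∅) Finset.univ
  | step {k : ℕ} {A C : Fin n → Finset (Fin m)} {S : Finset (Fin m)} (j : Fin n) (g : Fin m) :
      EGP2 v k A S → Unenvied v A j → (∀ j' : Fin n, Unenvied v A j' → j ≤ j') →
      g ∈ S → (∀ h ∈ S, v j {h} ≤ v j {g}) → (∀ h ∈ S, v j {g} ≤ v j {h} → g ≤ h) →
      Eliminated v (Function.update A j (insert g (A j))) C →
      EGP2 v (k + 1) C (S.erase g)

/-!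
The map is built stage by stage. At a stage where the manipulator picks, his truthful pick `g`
is his favorite good of the truthful pool, and the only goods of that pool that can enter `X`
are `g` itself and his manipulated pick; both are sent to `g`, which is new in `B`. At a stage
where another agent picks, both runs use that agent's true values, so by the tie-breaking rule
either the two picks coincide, or the manipulated pick had already left the truthful pool. In
the second case the truthful pick `g` may enter `X` while the manipulated pick `g'` leaves it,
and `g` takes over the image of `g'`: as `g` was still in the truthful pool, the manipulator
values it at most as much as any good he holds truthfully.
-/

section ChooseFavorite

variable {m : ℕ} (f : Fin m → ℝ)

lemma chooseFavorite_mem_filter (S : Finset (Fin m)) (hS : S.Nonempty) :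
    chooseFavorite f S hS ∈ S.filter fun g => ∀ h' ∈ S, f h' ≤ f g :=
  Finset.min'_mem _ _

lemma chooseFavorite_mem (S : Finset (Fin m)) (hS : S.Nonempty) : chooseFavorite f S hS ∈ S :=
  (Finset.mem_filter.mp (chooseFavorite_mem_filter f S hS)).1

lemma le_chooseFavorite {S : Finset (Fin m)} (hS : S.Nonempty) {x : Fin m} (hx : x ∈ S) :
    f x ≤ f (chooseFavorite f S hS) :=
  (Finset.mem_filter.mp (chooseFavorite_mem_filter f S hS)).2 x hx

lemma chooseFavorite_le_of_le {S : Finset (Fin m)} (hS : S.Nonempty) {x : Fin m} (hx : x ∈ S)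
    (hle : f (chooseFavorite f S hS) ≤ f x) : chooseFavorite f S hS ≤ x :=
  Finset.min'_le _ _ <| Finset.mem_filter.mpr
    ⟨hx, fun _ hy => (le_chooseFavorite f hS hy).trans hle⟩

lemma chooseFavorite_eq_of_mem {S S' : Finset (Fin m)} (hS : S.Nonempty) (hS' : S'.Nonempty)
    (h : chooseFavorite f S hS ∈ S') (h' : chooseFavorite f S' hS' ∈ S) :
    chooseFavorite f S hS = chooseFavorite f S' hS' :=
  le_antisymm
    (chooseFavorite_le_of_le f hS h' (le_chooseFavorite f hS' h))
    (chooseFavorite_le_of_le f hS' h (le_chooseFavorite f hS h'))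

end ChooseFavorite

section DominatingMap

variable {m : ℕ} (u : Fin m → ℝ)

def HasDominatingMap (X B : Finset (Fin m)) : Prop :=
  ∃ f : Fin m → Fin m, (∀ g ∈ X, f g ∈ B) ∧ (∀ g ∈ X, u g ≤ u (f g)) ∧
    ∀ b ∈ B, (X.filter fun g => f g = b).card ≤ 2

variable {u}

lemma hasDominatingMap_empty : HasDominatingMap u ∅ ∅ :=
  ⟨id, by simp, by simp, by simp⟩

lemma HasDominatingMap.mono {X X' B : Finset (Fin m)} (h : HasDominatingMap u X B)
    (hX : X' ⊆ X) : HasDominatingMap u X' B := by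
  obtain ⟨f, hfB, hfu, hcard⟩ := h
  exact ⟨f, fun g hg => hfB g (hX hg), fun g hg => hfu g (hX hg),
    fun b hb => (Finset.card_le_card (Finset.filter_subset_filter _ hX)).trans (hcard b hb)⟩

lemma HasDominatingMap.union_insert {X B S : Finset (Fin m)} {g : Fin m}
    (h : HasDominatingMap u X B) (hgB : g ∉ B) (hS : S.card ≤ 2)
    (hSg : ∀ x ∈ S, u x ≤ u g) :
    HasDominatingMap u (X ∪ S) (insert g B) := by
  classical
  obtain ⟨f, hfB, hfu, hcard⟩ := h
  refine ⟨fun x => if x ∈ S then g else f x, fun x hx => ?_, fun x hx => ?_, fun b hb => ?_⟩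
  · dsimp only
    split_ifs with hxS
    · exact Finset.mem_insert_self g B
    · exact Finset.mem_insert_of_mem (hfB x ((Finset.mem_union.mp hx).resolve_right hxS))
  · dsimp only
    split_ifs with hxS
    · exact hSg x hxS
    · exact hfu x ((Finset.mem_union.mp hx).resolve_right hxS)
  · by_cases hbg : b = g
    · subst hbg
      refine (Finset.card_le_card fun x hx => ?_).trans hS
      obtain ⟨hx, hfx⟩ := Finset.mem_filter.mp hx
      dsimp only at hfx
      split_ifs at hfx with hxS
      · exact hxS
      · exact absurd (hfx ▸ hfB x ((Finset.mem_union.mp hx).resolve_right hxS)) hgB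
    · refine (Finset.card_le_card fun x hx => ?_).trans
        (hcard b ((Finset.mem_insert.mp hb).resolve_left hbg))
      obtain ⟨hx, hfx⟩ := Finset.mem_filter.mp hx
      dsimp only at hfx
      split_ifs at hfx with hxS
      · exact absurd hfx.symm hbg
      · exact Finset.mem_filter.mpr ⟨(Finset.mem_union.mp hx).resolve_right hxS, hfx⟩

lemma HasDominatingMap.insert_erase {X B : Finset (Fin m)} {g g' : Fin m}
    (h : HasDominatingMap u X B) (hg' : g' ∈ X) (hg : ∀ b ∈ B, u g ≤ u b) :
    HasDominatingMap u (insert g (X.erase g')) B := by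
  classical
  obtain ⟨f, hfB, hfu, hcard⟩ := h
  have mem_X : ∀ x ∈ insert g (X.erase g'), x ≠ g → x ∈ X.erase g' := fun x hx hxg =>
    (Finset.mem_insert.mp hx).resolve_left hxg
  refine ⟨Function.update f g (f g'), fun x hx => ?_, fun x hx => ?_, fun b hb => ?_⟩
  · rcases eq_or_ne x g with rfl | hxg
    · simpa using hfB g' hg'
    · simpa [hxg] using hfB x (Finset.mem_of_mem_erase (mem_X x hx hxg))
  · rcases eq_or_ne x g with rfl | hxg
    · simpa using hg _ (hfB g' hg')
    · simpa [hxg] using hfu x (Finset.mem_of_mem_erase (mem_X x hx hxg))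
  · -- the new fiber is the image of the old one under `g' ↦ g`
    refine le_trans (Finset.card_le_card (t := (X.filter fun x => f x = b).image
      (Function.update id g' g)) fun x hx => ?_) (Finset.card_image_le.trans (hcard b hb))
    obtain ⟨hx, hfx⟩ := Finset.mem_filter.mp hx
    rw [Finset.mem_image]
    rcases eq_or_ne x g with rfl | hxg
    · exact ⟨g', Finset.mem_filter.mpr ⟨hg', by simpa using hfx⟩, by simp⟩
    · obtain ⟨hxg', hxX⟩ := Finset.mem_erase.mp (mem_X x hx hxg)
      exact ⟨x, Finset.mem_filter.mpr ⟨hxX, by simpa [hxg] using hfx⟩, by simp [hxg']⟩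

variable {B G B' G' : Finset (Fin m)} {g g' : Fin m}

/-- A stage at which the manipulator picks `g` truthfully and `g'` after misreporting. -/
lemma HasDominatingMap.step_self (h : HasDominatingMap u (B' ∪ (G' \ G)) B)
    (hBG : Disjoint B G) (hg : g ∈ G) (hgmax : ∀ x ∈ G, u x ≤ u g) (hg' : g' ∈ G') :
    HasDominatingMap u (insert g' B' ∪ (G'.erase g' \ G.erase g)) (insert g B) := by
  classical
  refine (h.union_insert (S := G.filter fun x => x = g ∨ x = g')
    (Finset.disjoint_right.mp hBG hg) ?_
    fun x hx => hgmax x (Finset.mem_filter.mp hx).1).mono ?_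
  · refine (Finset.card_le_card fun x hx => ?_).trans (Finset.card_le_two (a := g) (b := g'))
    simpa using (Finset.mem_filter.mp hx).2
  · intro x hx
    simp only [Finset.mem_union, Finset.mem_insert, Finset.mem_sdiff, Finset.mem_erase,
      Finset.mem_filter] at hx ⊢
    grind

/-- A stage at which another agent picks `g` in the truthful and `g'` in the manipulated run;
`htie` holds as he uses the same values in both runs. -/
lemma HasDominatingMap.step_other (h : HasDominatingMap u (B' ∪ (G' \ G)) B)
    (hB'G' : Disjoint B' G') (hg : g ∈ G) (hdom : ∀ x ∈ G, ∀ b ∈ B, u x ≤ u b)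
    (htie : g ∈ G' → g' ∈ G → g = g') (hg' : g' ∈ G') :
    HasDominatingMap u (B' ∪ (G'.erase g' \ G.erase g)) B := by
  by_cases hnew : g ∈ G' ∧ g ≠ g'
  · have hg'G : g' ∉ G := fun hg'G => hnew.2 (htie hnew.1 hg'G)
    have hg'X : g' ∈ B' ∪ (G' \ G) :=
      Finset.mem_union_right _ (Finset.mem_sdiff.mpr ⟨hg', hg'G⟩)
    refine (h.insert_erase hg'X (hdom g hg)).mono fun x hx => ?_
    have hg'B' : g' ∉ B' := Finset.disjoint_right.mp hB'G' hg'
    simp only [Finset.mem_union, Finset.mem_insert, Finset.mem_sdiff, Finset.mem_erase] at hx ⊢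
    grind
  · refine h.mono fun x hx => ?_
    simp only [Finset.mem_union, Finset.mem_sdiff, Finset.mem_erase] at hx ⊢
    grind

end DominatingMap

section RoundRobin

variable {n m : ℕ} (score : Fin n → Finset (Fin m) → Fin m → ℝ)

lemma rrState_succ (hn : 0 < n) (k : ℕ) (hk : (rrState score k).2.Nonempty) :
    rrState score (k + 1) =
      let i : Fin n := ⟨k % n, Nat.mod_lt k hn⟩
      let g := chooseFavorite (score i ((rrState score k).1 i)) (rrState score k).2 hk
      (Function.update (rrState score k).1 i (insert g ((rrState score k).1 i)),
        (rrState score k).2.erase g) := by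
  rw [rrState]
  simp only [hn, hk, dite_true]

lemma rrState_snd_card (hn : 0 < n) {k : ℕ} (hk : k ≤ m) :
    (rrState score k).2.card = m - k := by
  induction k with
  | zero => simp [rrState]
  | succ k ih =>
    have hne : (rrState score k).2.Nonempty := by
      rw [← Finset.card_pos, ih (by omega)]
      omega
    rw [rrState_succ score hn k hne, Finset.card_erase_of_mem (chooseFavorite_mem _ _ _),
      ih (by omega)]
    omega

lemma rrState_snd_nonempty (hn : 0 < n) {k : ℕ} (hk : k < m) :
    (rrState score k).2.Nonempty := by
  rw [← Finset.card_pos, rrState_snd_card score hn hk.le]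
  omega

lemma rrState_disjoint (hn : 0 < n) {k : ℕ} (hk : k ≤ m) (j : Fin n) :
    Disjoint ((rrState score k).1 j) (rrState score k).2 := by
  induction k with
  | zero => simp [rrState]
  | succ k ih =>
    rw [rrState_succ score hn k (rrState_snd_nonempty score hn hk)]
    simp only [Function.update_apply]
    split_ifs with hj
    · subst hj
      exact Finset.disjoint_insert_left.mpr
        ⟨Finset.notMem_erase _ _, (ih (by omega)).mono_right (Finset.erase_subset _ _)⟩
    · exact (ih (by omega)).mono_right (Finset.erase_subset _ _)

lemma rrState_snd_le_fst (hn : 0 < n) (u : Fin n → Fin m → ℝ) {k : ℕ} (hk : k ≤ m)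
    (j : Fin n) :
    ∀ x ∈ (rrState (fun j _ => u j) k).2, ∀ b ∈ (rrState (fun j _ => u j) k).1 j,
      u j x ≤ u j b := by
  induction k with
  | zero => simp [rrState]
  | succ k ih =>
    rw [rrState_succ _ hn k (rrState_snd_nonempty _ hn hk)]
    intro x hx b hb
    simp only [Function.update_apply] at hx hb
    have hx' := Finset.mem_of_mem_erase hx
    split_ifs at hb with hj
    · subst hj
      rcases Finset.mem_insert.mp hb with rfl | hb
      · exact le_chooseFavorite _ _ hx'
      · exact ih (by omega) x hx' b hb
    · exact ih (by omega) x hx' b hb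

theorem rrState_hasDominatingMap (hn : 0 < n) (u w : Fin n → Fin m → ℝ) (a : Fin n)
    (hw : ∀ j, j ≠ a → w j = u j) {k : ℕ} (hk : k ≤ m) :
    HasDominatingMap (u a)
      ((rrState (fun j _ => w j) k).1 a ∪
        ((rrState (fun j _ => w j) k).2 \ (rrState (fun j _ => u j) k).2))
      ((rrState (fun j _ => u j) k).1 a) := by
  induction k with
  | zero => simpa [rrState] using hasDominatingMap_empty
  | succ k ih =>
    have hk' : k < m := hk
    have hT := rrState_snd_nonempty (fun j _ => u j) hn hk'
    have hM := rrState_snd_nonempty (fun j _ => w j) hn hk'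
    rw [rrState_succ _ hn k hT, rrState_succ _ hn k hM]
    dsimp only
    by_cases hi : (⟨k % n, Nat.mod_lt k hn⟩ : Fin n) = a
    · rw [hi, Function.update_self, Function.update_self]
      exact (ih hk'.le).step_self (rrState_disjoint _ hn hk'.le a) (chooseFavorite_mem _ _ _)
        (fun x hx => le_chooseFavorite _ _ hx) (chooseFavorite_mem _ _ _)
    · rw [Function.update_of_ne (Ne.symm hi), Function.update_of_ne (Ne.symm hi), hw _ hi]
      exact (ih hk'.le).step_other (rrState_disjoint _ hn hk'.le a) (chooseFavorite_mem _ _ _)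
        (rrState_snd_le_fst hn u hk'.le a) (chooseFavorite_eq_of_mem _ _ _)
        (chooseFavorite_mem _ _ _)

end RoundRobin

theorem roundRobin1_mapping_exists_general {n m : ℕ} (hn : 0 < n)
    (v : Fin n → Finset (Fin m) → ℝ)
    (v1' : Finset (Fin m) → ℝ) :
    ∀ i : ℕ, i ≤ m →
      let a1 : Fin n := ⟨0, hn⟩
      let stT := rrState (fun j (_ : Finset (Fin m)) g => v j {g}) i
      let stM := rrState (fun j (_ : Finset (Fin m)) g =>
        Function.update v a1 v1' j {g}) i
      let Bi := stT.1 a1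
      let Gi := stT.2
      let Bi' := stM.1 a1
      let Gi' := stM.2
      let Xi := Bi' ∪ (Gi' \ Gi)
      ∃ f : Fin m → Fin m,
        (∀ g ∈ Xi, f g ∈ Bi) ∧
        (∀ g ∈ Xi, v a1 {g} ≤ v a1 {f g}) ∧
        ∀ b ∈ Bi, (Xi.filter fun g => f g = b).card ≤ 2 := by
  intro i hi
  exact rrState_hasDominatingMap hn (fun j g => v j {g})
    (fun j g => Function.update v ⟨0, hn⟩ v1' j {g}) ⟨0, hn⟩
    (fun j hj => by simp [Function.update_of_ne hj]) hi

/-- In Round-Robin (Mechanism 1), comparing the truthful run with a run where agent 1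
misreports `v₁'`: for every `i ≤ m`, letting `B_i` (resp. `B_i'`) be agent 1's bundle
and `G_i` (resp. `G_i'`) the remaining goods after stage `i` of the truthful
(resp. manipulated) run, and `X_i = B_i' ∪ (G_i' \ G_i)`, there is a mapping
`M_i : X_i → B_i` with `v₁({g}) ≤ v₁({M_i(g)})` for all `g ∈ X_i` and
`|M_i⁻¹(b)| ≤ 2` for all `b ∈ B_i`. -/
theorem roundRobin1_mapping_exists {n m : ℕ} (hn : 0 < n)
    (v : Fin n → Finset (Fin m) → ℝ) (hv : ∀ j, IsValuation (v j))
    (v1' : Finset (Fin m) → ℝ) (hv1' : IsValuation v1') :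
    ∀ i : ℕ, i ≤ m →
      let a1 : Fin n := ⟨0, hn⟩
      let stT := rrState (fun j (_ : Finset (Fin m)) g => v j {g}) i
      let stM := rrState (fun j (_ : Finset (Fin m)) g =>
        Function.update v a1 v1' j {g}) i
      let Bi := stT.1 a1
      let Gi := stT.2
      let Bi' := stM.1 a1
      let Gi' := stM.2
      let Xi := Bi' ∪ (Gi' \ Gi)
      ∃ f : Fin m → Fin m,
        (∀ g ∈ Xi, f g ∈ Bi) ∧
        (∀ g ∈ Xi, v a1 {g} ≤ v a1 {f g}) ∧
        ∀ b ∈ Bi, (Xi.filter fun g => f g = b).card ≤ 2 :=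
  roundRobin1_mapping_exists_general hn v v1'
end

section
/- Let n ≥ 2, m ≥ n, and consider Mechanism 2 (Round-Robin for general valuations) run on a profile (v_1, …, v_n) of normalized, monotone valuations over G, where agent 1's valuation v_1 is XOS. Then for every normalized monotone misreport v_1' by agent 1, the bundle agent 1 receives from Mechanism 2 under the misreport has v_1-value at most ⌈m/n⌉ times the v_1-value of the bundle he receives under truthful reporting. Hence Mechanism 2 admits an incentive ratio of at most ⌈m/n⌉ for XOS valuations. -/
lemma additive_sum {m : ℕ} {f : Finset (Fin m) → ℝ} (hf : AdditiveVal f) :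
    ∀ S : Finset (Fin m), f S = ∑ g ∈ S, f {g} := by
  intro S
  induction S using Finset.induction with
  | empty =>
      have h := hf ∅ ∅ (by simp)
      simp only [Finset.union_empty] at h
      simpa using by linarith
  | @insert a S ha ih =>
      have hd : Disjoint ({a} : Finset (Fin m)) S := by simpa using ha
      have h := hf {a} S hd
      rw [Finset.sum_insert ha, ← ih, ← h, ← Finset.insert_eq]

lemma chooseFavorite_spec {m : ℕ} (f : Fin m → ℝ) (S : Finset (Fin m)) (h : S.Nonempty) :
    chooseFavorite f S h ∈ S ∧ ∀ h' ∈ S, f h' ≤ f (chooseFavorite f S h) := by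
  have hmem := Finset.min'_mem (S.filter fun g => ∀ h' ∈ S, f h' ≤ f g) (by
    obtain ⟨b, hb, hmax⟩ := S.exists_max_image f h
    exact ⟨b, Finset.mem_filter.mpr ⟨hb, hmax⟩⟩)
  rw [Finset.mem_filter] at hmem
  exact hmem

lemma rr_step_mono {n m : ℕ} (score : Fin n → Finset (Fin m) → Fin m → ℝ) (i : Fin n)
    (k : ℕ) : (rrState score k).1 i ⊆ (rrState score (k + 1)).1 i := by
  rw [rrState]
  dsimp only
  split_ifs with hn h
  · dsimp only
    by_cases hi : i = ⟨k % n, Nat.mod_lt k hn⟩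
    · subst hi
      rw [Function.update_self]
      exact Finset.subset_insert _ _
    · rw [Function.update_of_ne hi]
  · exact subset_rfl
  · exact subset_rfl

lemma rr_mono {n m : ℕ} (score : Fin n → Finset (Fin m) → Fin m → ℝ) (i : Fin n)
    {k l : ℕ} (hkl : k ≤ l) : (rrState score k).1 i ⊆ (rrState score l).1 i := by
  induction l with
  | zero => simp [Nat.le_zero.mp hkl]
  | succ l ih =>
      rcases Nat.lt_or_ge k (l + 1) with h | h
      · exact (ih (Nat.lt_succ_iff.mp h)).trans (rr_step_mono score i l)
      · have heq : k = l + 1 := le_antisymm hkl h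
        subst heq; exact subset_rfl

lemma rr_card {n m : ℕ} (hn : 0 < n) (score : Fin n → Finset (Fin m) → Fin m → ℝ) (k : ℕ) :
    ((rrState score k).1 ⟨0, hn⟩).card ≤ (k + n - 1) / n := by
  induction k with
  | zero => simp [rrState]
  | succ k ih =>
      have hstep : ((rrState score (k + 1)).1 ⟨0, hn⟩).card ≤
          ((rrState score k).1 ⟨0, hn⟩).card + (if k % n = 0 then 1 else 0) := by
        rw [rrState]
        dsimp only
        rw [dif_pos hn]
        by_cases h : (rrState score k).2.Nonempty
        · rw [dif_pos h]
          dsimp only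
          by_cases hkn : k % n = 0
          · rw [if_pos hkn]
            have hi : (⟨0, hn⟩ : Fin n) = ⟨k % n, Nat.mod_lt k hn⟩ := Fin.ext (by simp [hkn])
            rw [hi, Function.update_self]
            exact Finset.card_insert_le _ _
          · rw [if_neg hkn]
            have hi : (⟨0, hn⟩ : Fin n) ≠ ⟨k % n, Nat.mod_lt k hn⟩ := by
              intro hcon
              exact hkn (by simpa using (congrArg Fin.val hcon).symm)
            rw [Function.update_of_ne hi]
            omega
        · rw [dif_neg h]
          split_ifs <;> omega
      rcases Nat.eq_zero_or_pos (k % n) with hkn | hkn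
      · obtain ⟨q, rfl⟩ := Nat.dvd_of_mod_eq_zero hkn
        have e2 : (n * q + n - 1) / n = q := by
          have e1 : n * q + n - 1 = n * q + (n - 1) := by omega
          rw [e1, Nat.mul_add_div hn, Nat.div_eq_of_lt (by omega)]
          omega
        have e3 : (n * q + 1 + n - 1) / n = q + 1 := by
          have e1 : n * q + 1 + n - 1 = n * q + n := by omega
          rw [e1, Nat.mul_add_div hn, Nat.div_self hn]
        rw [e3]
        rw [if_pos hkn] at hstep
        rw [e2] at ih
        omega
      · rw [if_neg (by omega : ¬ k % n = 0)] at hstep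
        have hmono : (k + n - 1) / n ≤ (k + 1 + n - 1) / n := Nat.div_le_div_right (by omega)
        omega

lemma rr_one {n m : ℕ} (hn : 0 < n) (hm : 0 < m) (score : Fin n → Finset (Fin m) → Fin m → ℝ) :
    ∃ g : Fin m, (∀ h : Fin m, score ⟨0, hn⟩ ∅ h ≤ score ⟨0, hn⟩ ∅ g) ∧
      g ∈ (rrState score 1).1 ⟨0, hn⟩ := by
  have hne : (Finset.univ : Finset (Fin m)).Nonempty := ⟨⟨0, hm⟩, Finset.mem_univ _⟩
  have h0 : rrState score 0 = (fun _ => (∅ : Finset (Fin m)), Finset.univ) := rfl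
  have hi : (⟨0 % n, Nat.mod_lt 0 hn⟩ : Fin n) = ⟨0, hn⟩ := Fin.ext (Nat.zero_mod n)
  rw [show (1 : ℕ) = 0 + 1 from rfl, rrState]
  dsimp only
  rw [h0]
  dsimp only
  rw [dif_pos hn, dif_pos hne]
  dsimp only
  rw [hi]
  refine ⟨chooseFavorite (score ⟨0, hn⟩ ∅) Finset.univ hne, ?_, ?_⟩
  · exact fun h => (chooseFavorite_spec _ _ hne).2 h (Finset.mem_univ _)
  · rw [Function.update_self]
    exact Finset.mem_insert_self _ _

/-- Mechanism 2 (Round-Robin for general valuations) admits an incentive ratio of at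
most ⌈m/n⌉ for XOS valuations: if agent 1's true valuation is XOS, no normalized
monotone misreport can increase his utility by more than a factor of ⌈m/n⌉. -/
theorem roundRobin2_incentive_xos {n m : ℕ} (hn : 2 ≤ n) (hm : n ≤ m)
    (v : Fin n → Finset (Fin m) → ℝ) (hv : ∀ j, IsValuation (v j))
    (hxos : XOSVal (v ⟨0, by omega⟩))
    (v' : Finset (Fin m) → ℝ) (hv' : IsValuation v') :
    v ⟨0, by omega⟩ (roundRobin2 (Function.update v ⟨0, by omega⟩ v') ⟨0, by omega⟩) ≤
      (((m + n - 1) / n : ℕ) : ℝ) * v ⟨0, by omega⟩ (roundRobin2 v ⟨0, by omega⟩) := by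
  have hn0 : 0 < n := by omega
  set i0 : Fin n := ⟨0, by omega⟩ with hi0
  obtain ⟨g, hgmax, hgmem⟩ := rr_one hn0 (by omega : 0 < m)
    (fun i A g => v i (insert g A) - v i A)
  have hA : g ∈ roundRobin2 v i0 :=
    rr_mono _ _ (by omega : 1 ≤ m) hgmem
  have hmono := (hv i0).2
  have hvg_le : v i0 {g} ≤ v i0 (roundRobin2 v i0) :=
    hmono _ _ (Finset.singleton_subset_iff.mpr hA)
  have hg0 : 0 ≤ v i0 {g} := by
    have h := hmono ∅ {g} (Finset.empty_subset _)
    rw [(hv i0).1] at h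
    exact h
  obtain ⟨k, f, hadd, hprop⟩ := hxos
  set B := roundRobin2 (Function.update v i0 v') i0 with hB
  obtain ⟨j, hj⟩ := (hprop B).1
  have hcard : B.card ≤ (m + n - 1) / n := rr_card hn0 _ m
  have hgmax' : ∀ x : Fin m, v i0 (insert x ∅) - v i0 ∅ ≤ v i0 (insert g ∅) - v i0 ∅ := hgmax
  have hle : ∀ x ∈ B, f j {x} ≤ v i0 {g} := by
    intro x _
    refine le_trans ((hprop {x}).2 j) ?_
    have h := hgmax' x
    simp only [Finset.insert_empty] at h
    linarith
  have hsum : v i0 B ≤ B.card * v i0 {g} := by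
    rw [hj, additive_sum (hadd j)]
    calc ∑ x ∈ B, f j {x} ≤ ∑ _x ∈ B, v i0 {g} := Finset.sum_le_sum hle
      _ = B.card * v i0 {g} := by rw [Finset.sum_const, nsmul_eq_mul]
  calc v i0 B ≤ B.card * v i0 {g} := hsum
    _ ≤ (((m + n - 1) / n : ℕ) : ℝ) * v i0 {g} := by
        exact mul_le_mul_of_nonneg_right (by exact_mod_cast hcard) hg0
    _ ≤ (((m + n - 1) / n : ℕ) : ℝ) * v i0 (roundRobin2 v i0) := by
        exact mul_le_mul_of_nonneg_left hvg_le (by positivity)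
end

section
/- For all integers n ≥ 2 and m ≥ n, there exists a profile (v_1, …, v_n) of normalized, monotone, XOS valuations over G = {g_1, …, g_m}, with all of agent 1's marginal values in [0, 1] (i.e., 0 ≤ v_1(S ∪ {g}) − v_1(S) ≤ 1 for every S ⊆ G and g ∈ G \ S), such that the allocation A = (A_1, …, A_n) produced by Mechanism 2 (Round-Robin for general valuations) under truthful reporting satisfies v_1(A_2) − v_1(A_1) ≥ ⌈(m − 1)/n⌉ − 1. Hence the maximum envy of Mechanism 2's output can be of order Θ(m/n), so Mechanism 2 does not provide any meaningful fairness guarantee for XOS valuations as m grows. -/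
/-!
Agent 0 (the paper's agent 1) values a bundle by the number of its goods of index `≡ 1 (mod n)`,
but values any bundle containing good 0 at least 1; the other agents value nothing. This is the
maximum of two additive valuations with 0/1 weights, so it is XOS with marginals in `[0, 1]`.
Agent 0's bundle contains good 0 from its first pick on and never a good `≡ 1 (mod n)`, so after
any one further good it is worth exactly 1: at every stage the lowest-index remaining good is a
favourite of the agent to move, and the smallest-index tie-breaking deals good `k` to agent
`k % n`. Agent 1 thus receives all `⌈(m - 1)/n⌉` goods `≡ 1 (mod n)`, which agent 0 values at
their number, while agent 0 values its own bundle at 1.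
-/

open Finset

section Valuations

variable {m : ℕ}

theorem addVal_additive (w : Fin m → ℝ) : AdditiveVal (addVal w) :=
  fun _ _ hST => sum_union hST

theorem isValuation_addVal {w : Fin m → ℝ} (hw : ∀ g, 0 ≤ w g) : IsValuation (addVal w) :=
  ⟨sum_empty, fun _ _ hST => sum_le_sum_of_subset_of_nonneg hST fun g _ _ => hw g⟩

theorem addVal_insert_sub {w : Fin m → ℝ} {S : Finset (Fin m)} {g : Fin m} (hg : g ∉ S) :
    addVal w (insert g S) - addVal w S = w g := by
  simp only [addVal, sum_insert hg, add_sub_cancel_right]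

theorem AdditiveVal.xosVal {v : Finset (Fin m) → ℝ} (hv : AdditiveVal v) : XOSVal v :=
  ⟨0, fun _ => v, fun _ => hv, fun _ => ⟨⟨0, rfl⟩, fun _ => le_rfl⟩⟩

theorem XOSVal.sup {v w : Finset (Fin m) → ℝ} (hv : XOSVal v) (hw : XOSVal w) :
    XOSVal (v ⊔ w) := by
  obtain ⟨k, f, hf, hfv⟩ := hv
  obtain ⟨l, g, hg, hgw⟩ := hw
  refine ⟨k + 1 + l, Fin.append (m := k + 1) (n := l + 1) f g,
    Fin.addCases (m := k + 1) (n := l + 1) (by simpa using hf) (by simpa using hg),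
    fun S => ⟨?_, Fin.addCases (m := k + 1) (n := l + 1) (fun j => ?_) (fun j => ?_)⟩⟩
  · rcases le_total (w S) (v S) with hwv | hvw
    · obtain ⟨j, hj⟩ := (hfv S).1
      exact ⟨Fin.castAdd (l + 1) j, by simpa [hj] using hwv⟩
    · obtain ⟨j, hj⟩ := (hgw S).1
      exact ⟨Fin.natAdd (k + 1) j, by simpa [hj] using hvw⟩
  · simpa using le_sup_of_le_left ((hfv S).2 j)
  · simpa using le_sup_of_le_right ((hgw S).2 j)

theorem IsValuation.sup {v w : Finset (Fin m) → ℝ} (hv : IsValuation v) (hw : IsValuation w) :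
    IsValuation (v ⊔ w) :=
  ⟨by simp [hv.1, hw.1], fun S T hST => sup_le_sup (hv.2 S T hST) (hw.2 S T hST)⟩

theorem sup_insert_sub_le {v w : Finset (Fin m) → ℝ} {S : Finset (Fin m)} {g : Fin m} {c : ℝ}
    (hv : v (insert g S) - v S ≤ c) (hw : w (insert g S) - w S ≤ c) :
    (v ⊔ w) (insert g S) - (v ⊔ w) S ≤ c := by
  simp only [Pi.sup_apply, sub_le_iff_le_add, sup_le_iff] at *
  exact ⟨hv.trans (add_le_add_right le_sup_left c), hw.trans (add_le_add_right le_sup_right c)⟩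

def countVal (p : Fin m → Prop) [DecidablePred p] : Finset (Fin m) → ℝ :=
  addVal fun g => if p g then 1 else 0

theorem countVal_apply (p : Fin m → Prop) [DecidablePred p] (S : Finset (Fin m)) :
    countVal p S = #(S.filter p) := by
  simp [countVal, addVal, sum_boole]

theorem isValuation_countVal (p : Fin m → Prop) [DecidablePred p] :
    IsValuation (countVal p) :=
  isValuation_addVal fun g => by split_ifs <;> norm_num

theorem countVal_insert_sub_le_one (p : Fin m → Prop) [DecidablePred p] {S : Finset (Fin m)}
    {g : Fin m} (hg : g ∉ S) : countVal p (insert g S) - countVal p S ≤ 1 := by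
  rw [countVal, addVal_insert_sub hg]
  split_ifs <;> norm_num

end Valuations

theorem chooseFavorite_eq_of_isLeast {m : ℕ} {f : Fin m → ℝ} {S : Finset (Fin m)}
    (hS : S.Nonempty) {g : Fin m} (hleast : IsLeast S g) (hmax : ∀ g' ∈ S, f g' ≤ f g) :
    chooseFavorite f S hS = g :=
  le_antisymm (min'_le _ g (mem_filter.2 ⟨hleast.1, hmax⟩))
    (le_min' _ _ _ fun _ hg' => hleast.2 (mem_filter.1 hg').1)

def indexOrderBundles (m n k : ℕ) (i : Fin n) : Finset (Fin m) :=
  {g | g.val < k ∧ g.val % n = i.val}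

section IndexOrder

variable {n m : ℕ}

def indexOrderPool (k : ℕ) : Finset (Fin m) :=
  {g | k ≤ g.val}

theorem mod_eq_of_mem_indexOrderBundles {k : ℕ} {i : Fin n} {g : Fin m}
    (hg : g ∈ indexOrderBundles m n k i) : g.val % n = i.val :=
  (mem_filter.1 hg).2.2

theorem isLeast_indexOrderPool {k : ℕ} (hk : k < m) :
    IsLeast (↑(indexOrderPool k : Finset (Fin m))) (⟨k, hk⟩ : Fin m) :=
  ⟨by simp [indexOrderPool], fun _ hg => by simpa [indexOrderPool, Fin.le_def] using hg⟩

theorem indexOrderPool_erase {k : ℕ} (hk : k < m) :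
    (indexOrderPool k).erase ⟨k, hk⟩ = indexOrderPool (k + 1) := by
  ext g
  simp only [indexOrderPool, mem_erase, mem_filter, mem_univ, true_and, ne_eq, Fin.ext_iff]
  omega

theorem update_indexOrderBundles (hn : 0 < n) {k : ℕ} (hk : k < m) :
    Function.update (indexOrderBundles m n k) ⟨k % n, Nat.mod_lt k hn⟩
        (insert ⟨k, hk⟩ (indexOrderBundles m n k ⟨k % n, Nat.mod_lt k hn⟩)) =
      indexOrderBundles m n (k + 1) := by
  funext i
  ext g
  by_cases hgk : g.val = k
  · obtain rfl : g = ⟨k, hk⟩ := Fin.ext hgk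
    rcases eq_or_ne i ⟨k % n, Nat.mod_lt k hn⟩ with rfl | hi
    · simp [indexOrderBundles]
    · simp only [Function.update_of_ne hi, indexOrderBundles, mem_filter, mem_univ, true_and,
        lt_irrefl, false_and, false_iff, not_and]
      exact fun _ hmod => hi (Fin.ext hmod.symm)
  · have hg : g ≠ ⟨k, hk⟩ := fun h => hgk (congrArg Fin.val h)
    rw [Function.update_apply]
    split_ifs with hi
    · subst hi
      simp only [mem_insert, hg, false_or, indexOrderBundles, mem_filter, mem_univ, true_and]
      omega
    · simp only [indexOrderBundles, mem_filter, mem_univ, true_and]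
      omega

theorem rrState_eq_indexOrder (hn : 0 < n) {score : Fin n → Finset (Fin m) → Fin m → ℝ}
    (hfav : ∀ k (hk : k < m) (i : Fin n) (g : Fin m), k ≤ g.val →
      score i (indexOrderBundles m n k i) g ≤ score i (indexOrderBundles m n k i) ⟨k, hk⟩) :
    ∀ k ≤ m, rrState score k = (indexOrderBundles m n k, indexOrderPool k)
  | 0, _ => by
    refine Prod.ext (funext fun i => ?_) ?_ <;> simp [rrState, indexOrderBundles, indexOrderPool]
  | k + 1, hk => by
    have hkm : k < m := hk
    have hne : (indexOrderPool k : Finset (Fin m)).Nonempty :=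
      ⟨_, (isLeast_indexOrderPool hkm).1⟩
    rw [rrState, rrState_eq_indexOrder hn hfav k hkm.le, dif_pos hn, dif_pos hne]
    dsimp only
    rw [chooseFavorite_eq_of_isLeast hne (isLeast_indexOrderPool hkm)
      fun g hg => hfav k hkm _ g (mem_filter.1 hg).2]
    exact Prod.ext (update_indexOrderBundles hn hkm) (indexOrderPool_erase hkm)

theorem ceil_div_le_card_indexOrderBundles_one (hn : 1 < n) :
    (m - 1 + (n - 1)) / n ≤ #(indexOrderBundles m n m ⟨1, hn⟩) := by
  have hval : (indexOrderBundles m n m ⟨1, hn⟩).map Fin.valEmbedding =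
      (range m).filter fun x => x % n = 1 := by
    ext x
    simp only [indexOrderBundles, mem_map, mem_filter, mem_univ, true_and, mem_range,
      Fin.valEmbedding_apply]
    constructor
    · rintro ⟨g, ⟨hg, hmod⟩, rfl⟩
      exact ⟨hg, hmod⟩
    · rintro ⟨hx, hmod⟩
      exact ⟨⟨x, hx⟩, ⟨hx, hmod⟩, rfl⟩
  rw [← card_map Fin.valEmbedding, hval]
  refine le_card_of_inj_on_range (fun j => 1 + j * n) (fun j hj => ?_)
    fun i _ j _ hij => Nat.eq_of_mul_eq_mul_right (Nat.zero_lt_of_lt hn) (by simpa using hij)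
  have hjn : (j + 1) * n ≤ m - 1 + (n - 1) := (Nat.le_div_iff_mul_le (by omega)).1 hj
  rw [add_mul, one_mul] at hjn
  simp only [mem_filter, mem_range, Nat.add_mul_mod_self_right, Nat.mod_eq_of_lt hn, and_true]
  omega

end IndexOrder

section EnvyProfile

variable {n m : ℕ}

def envyVal (n : ℕ) : Finset (Fin m) → ℝ :=
  countVal (fun g : Fin m => g.val % n = 1) ⊔ countVal (fun g : Fin m => g.val = 0)

def envyProfile (n : ℕ) (i : Fin n) : Finset (Fin m) → ℝ :=
  if i.val = 0 then envyVal n else 0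

theorem isValuation_envyVal : IsValuation (envyVal (m := m) n) :=
  (isValuation_countVal _).sup (isValuation_countVal _)

theorem xosVal_envyVal : XOSVal (envyVal (m := m) n) :=
  (addVal_additive _).xosVal.sup (addVal_additive _).xosVal

theorem envyVal_insert_sub_le_one {S : Finset (Fin m)} {g : Fin m} (hg : g ∉ S) :
    envyVal n (insert g S) - envyVal n S ≤ 1 :=
  sup_insert_sub_le (countVal_insert_sub_le_one _ hg) (countVal_insert_sub_le_one _ hg)

theorem isValuation_envyProfile (i : Fin n) : IsValuation (envyProfile (m := m) n i) := by
  unfold envyProfile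
  split_ifs
  exacts [isValuation_envyVal, ⟨rfl, fun _ _ _ => le_rfl⟩]

theorem xosVal_envyProfile (i : Fin n) : XOSVal (envyProfile (m := m) n i) := by
  unfold envyProfile
  split_ifs
  exacts [xosVal_envyVal, AdditiveVal.xosVal fun _ _ _ => (add_zero 0).symm]

theorem envyVal_le_one {S : Finset (Fin m)} (hS : #(S.filter fun g => g.val % n = 1) ≤ 1) :
    envyVal n S ≤ 1 := by
  have hzero : #(S.filter fun g : Fin m => g.val = 0) ≤ 1 :=
    card_le_one.2 fun a ha b hb => Fin.ext ((mem_filter.1 ha).2.trans (mem_filter.1 hb).2.symm)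
  simp only [envyVal, Pi.sup_apply, countVal_apply, sup_le_iff]
  exact ⟨mod_cast hS, mod_cast hzero⟩

theorem envyVal_insert_le_one {A : Finset (Fin m)} (hA : ∀ a ∈ A, a.val % n ≠ 1) (g : Fin m) :
    envyVal n (insert g A) ≤ 1 := by
  refine envyVal_le_one ?_
  rw [filter_insert, filter_eq_empty_iff.2 hA]
  split_ifs <;> simp

theorem one_le_envyVal {S : Finset (Fin m)} {g : Fin m} (hg : g.val = 0) (hgS : g ∈ S) :
    1 ≤ envyVal n S := by
  refine le_sup_of_le_right ?_
  rw [countVal_apply, Nat.one_le_cast, Nat.one_le_iff_ne_zero, Ne, card_eq_zero,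
    ← not_nonempty_iff_eq_empty, not_not]
  exact ⟨g, mem_filter.2 ⟨hgS, hg⟩⟩

theorem envyProfile_lowest_favorite (k : ℕ) (hk : k < m) (i : Fin n) (g : Fin m) :
    envyProfile n i (insert g (indexOrderBundles m n k i)) -
        envyProfile n i (indexOrderBundles m n k i) ≤
      envyProfile n i (insert ⟨k, hk⟩ (indexOrderBundles m n k i)) -
        envyProfile n i (indexOrderBundles m n k i) := by
  by_cases hi : i.val = 0
  · simp only [envyProfile, hi, if_true]
    have hA : ∀ a ∈ indexOrderBundles m n k i, a.val % n ≠ 1 := fun a ha => by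
      simp [mod_eq_of_mem_indexOrderBundles ha, hi]
    have hzero : (⟨0, by omega⟩ : Fin m) ∈ insert ⟨k, hk⟩ (indexOrderBundles m n k i) := by
      rcases Nat.eq_zero_or_pos k with rfl | hk0
      · exact mem_insert_self _ _
      · exact mem_insert_of_mem (by simp [indexOrderBundles, hk0, hi])
    linarith [envyVal_insert_le_one hA g, one_le_envyVal (n := n) rfl hzero]
  · simp [envyProfile, hi]

theorem envyVal_indexOrderBundles_zero_le_one (hn : 0 < n) (k : ℕ) :
    envyVal n (indexOrderBundles m n k ⟨0, hn⟩) ≤ 1 := by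
  refine envyVal_le_one (le_of_eq_of_le (card_eq_zero.2 (filter_eq_empty_iff.2 fun g hg => ?_))
    zero_le_one)
  simp [mod_eq_of_mem_indexOrderBundles hg]

theorem card_le_envyVal_indexOrderBundles_one (hn : 1 < n) (k : ℕ) :
    (#(indexOrderBundles m n k ⟨1, hn⟩) : ℝ) ≤ envyVal n (indexOrderBundles m n k ⟨1, hn⟩) := by
  refine le_sup_of_le_left (le_of_eq ?_)
  rw [countVal_apply,
    filter_true_of_mem fun g hg => (mod_eq_of_mem_indexOrderBundles hg : g.val % n = 1)]

theorem roundRobin2_envyProfile (hn : 0 < n) :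
    roundRobin2 (envyProfile n) = indexOrderBundles m n m :=
  congrArg Prod.fst
    (rrState_eq_indexOrder hn (fun k hk i g _ => envyProfile_lowest_favorite k hk i g) m le_rfl)

end EnvyProfile

/-- For all n ≥ 2 and m ≥ n there is an XOS profile, with all of agent 1's marginal
values in [0, 1], on which Mechanism 2 (run truthfully) produces an allocation `A` with
`v₁(A₂) − v₁(A₁) ≥ ⌈(m − 1)/n⌉ − 1`; so Round-Robin has maximum envy Θ(m/n) for XOS
valuations. -/
theorem roundRobin2_xos_envy {n m : ℕ} (hn : 2 ≤ n) :
    ∃ v : Fin n → Finset (Fin m) → ℝ,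
      (∀ j, IsValuation (v j) ∧ XOSVal (v j)) ∧
      (∀ (S : Finset (Fin m)) (g : Fin m), g ∉ S →
        0 ≤ v ⟨0, by omega⟩ (insert g S) - v ⟨0, by omega⟩ S ∧
        v ⟨0, by omega⟩ (insert g S) - v ⟨0, by omega⟩ S ≤ 1) ∧
      ((((m - 1 + (n - 1)) / n : ℕ) : ℝ) - 1 ≤
        v ⟨0, by omega⟩ (roundRobin2 v ⟨1, by omega⟩) -
          v ⟨0, by omega⟩ (roundRobin2 v ⟨0, by omega⟩)) := by
  have hv0 : envyProfile (m := m) n ⟨0, by omega⟩ = envyVal n := if_pos rfl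
  refine ⟨envyProfile n, fun j => ⟨isValuation_envyProfile j, xosVal_envyProfile j⟩,
    fun S g hg => ?_, ?_⟩
  · rw [hv0]
    exact ⟨sub_nonneg.2 (isValuation_envyVal.2 _ _ (subset_insert g S)),
      envyVal_insert_sub_le_one hg⟩
  · rw [hv0, roundRobin2_envyProfile (by omega)]
    have hcard : (((m - 1 + (n - 1)) / n : ℕ) : ℝ) ≤ #(indexOrderBundles m n m ⟨1, hn⟩) :=
      mod_cast ceil_div_le_card_indexOrderBundles_one hn
    linarith [card_le_envyVal_indexOrderBundles_one (m := m) hn m,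
      envyVal_indexOrderBundles_zero_le_one (m := m) (Nat.zero_lt_of_lt hn) m]
end
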